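/- arXiv:1601.00083 — 6 statements merged into one kernel-verified Lean document; each statement's English description precedes it below -/
import Mathlib

section
/- Define A(x) = 8(π-2)²(π³-60π+120)x⁸ - 6(π-2)(π⁶-100π⁴+200π³-480(π-2)²)x⁶ + 3π³(π⁶-720(π-2)²)x⁴ + 540π⁶(π-2)x² - 45π⁹. Then A(x) < 0 for all x in (0, c], where c = -((π³-60(π-2))π³)/(240(π³-24(π-2))). -/
open Real

/-!
Since `π³ - 60π + 120 < 0` the `x⁸` term is non-positive, while the coefficients of `x⁶`, `x⁴`
and `x²` are non-negative, so on `(0, c]` the polynomial is bounded by the value of its remaining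
part at any point above `c`. Taking `1.3428 > c` and six-digit bounds on `π`, that value is below
`1.205 · 10⁶ - 45π⁹ < 0`.
-/

lemma pi_pow_bounds :
    (9.8696 : ℝ) < π ^ 2 ∧ π ^ 2 < 9.86961 ∧ (31.00624 : ℝ) < π ^ 3 ∧ π ^ 3 < 31.00631 ∧
      (97.4088 : ℝ) < π ^ 4 ∧ π ^ 4 < 97.4093 ∧ (961.386 : ℝ) < π ^ 6 ∧ π ^ 6 < 961.392 := by
  have hl := pi_gt_d6
  have hu := pi_lt_d6
  have h2l : (9.8696 : ℝ) < π ^ 2 := by nlinarith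
  have h2u : π ^ 2 < 9.86961 := by nlinarith
  have h3l : (31.00624 : ℝ) < π ^ 3 := by nlinarith
  have h3u : π ^ 3 < 31.00631 := by nlinarith
  refine ⟨h2l, h2u, h3l, h3u, by nlinarith, by nlinarith, ?_, ?_⟩
  · nlinarith [sq_nonneg (π ^ 3 - 31.00624)]
  · nlinarith [sq_nonneg (π ^ 3 - 31.00631)]

lemma pi_pow_nine_gt : (29808 : ℝ) < π ^ 9 := by
  obtain ⟨-, -, h3, -⟩ := pi_pow_bounds
  calc (29808 : ℝ) < 31.00624 ^ 3 := by norm_num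
    _ < (π ^ 3) ^ 3 := by gcongr
    _ = π ^ 9 := by ring

lemma pi_cube_sub_sixty_mul_pi_add_lt_zero : π ^ 3 - 60 * π + 120 < 0 := by
  obtain ⟨-, -, -, h3, -⟩ := pi_pow_bounds
  linarith [pi_gt_d6]

lemma neg_coeff_six_mem :
    -(6 * (π - 2) * (π ^ 6 - 100 * π ^ 4 + 200 * π ^ 3 - 480 * (π - 2) ^ 2)) ∈
      Set.Icc (0 : ℝ) 21960 := by
  obtain ⟨h2l, h2u, h3l, h3u, h4l, h4u, h6l, h6u⟩ := pi_pow_bounds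
  have hl := pi_gt_d6
  have hu := pi_lt_d6
  constructor <;> nlinarith

lemma coeff_four_mem : 3 * π ^ 3 * (π ^ 6 - 720 * (π - 2) ^ 2) ∈ Set.Icc (0 : ℝ) 2150 := by
  obtain ⟨h2l, h2u, h3l, h3u, -, -, h6l, h6u⟩ := pi_pow_bounds
  have hl := pi_gt_d6
  have hu := pi_lt_d6
  have hpos : 0 < π ^ 6 - 720 * (π - 2) ^ 2 := by nlinarith
  have hlt : π ^ 6 - 720 * (π - 2) ^ 2 < 23.07 := by nlinarith
  constructor <;> nlinarith

lemma coeff_two_mem : 540 * π ^ 6 * (π - 2) ∈ Set.Icc (0 : ℝ) 592700 := by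
  obtain ⟨-, -, -, -, -, -, h6l, h6u⟩ := pi_pow_bounds
  have hl := pi_gt_d6
  have hu := pi_lt_d6
  constructor <;> nlinarith

lemma critical_point_le :
    -((π ^ 3 - 60 * (π - 2)) * π ^ 3) / (240 * (π ^ 3 - 24 * (π - 2))) ≤ 1.3428 := by
  obtain ⟨-, -, h3l, h3u, -⟩ := pi_pow_bounds
  have hl := pi_gt_d6
  have hu := pi_lt_d6
  rw [div_le_iff₀ (by nlinarith)]
  nlinarith

theorem A_neg (x : ℝ) (hx : 0 < x)
    (hx' : x ≤ -((π ^ 3 - 60 * (π - 2)) * π ^ 3) / (240 * (π ^ 3 - 24 * (π - 2)))) :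
    8 * (π - 2) ^ 2 * (π ^ 3 - 60 * π + 120) * x ^ 8 -
        6 * (π - 2) * (π ^ 6 - 100 * π ^ 4 + 200 * π ^ 3 - 480 * (π - 2) ^ 2) * x ^ 6 +
        3 * π ^ 3 * (π ^ 6 - 720 * (π - 2) ^ 2) * x ^ 4 +
        540 * π ^ 6 * (π - 2) * x ^ 2 - 45 * π ^ 9 < 0 := by
  have hxc : x ≤ 1.3428 := hx'.trans critical_point_le
  obtain ⟨h6₀, h6⟩ := neg_coeff_six_mem
  obtain ⟨h4₀, h4⟩ := coeff_four_mem
  obtain ⟨h2₀, h2⟩ := coeff_two_mem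
  have t8 : 8 * (π - 2) ^ 2 * (π ^ 3 - 60 * π + 120) * x ^ 8 ≤ 0 :=
    mul_nonpos_of_nonpos_of_nonneg
      (mul_nonpos_of_nonneg_of_nonpos (by positivity) pi_cube_sub_sixty_mul_pi_add_lt_zero.le)
      (by positivity)
  have t6 : -(6 * (π - 2) * (π ^ 6 - 100 * π ^ 4 + 200 * π ^ 3 - 480 * (π - 2) ^ 2)) * x ^ 6 ≤
      21960 * 1.3428 ^ 6 := by gcongr
  have t4 : 3 * π ^ 3 * (π ^ 6 - 720 * (π - 2) ^ 2) * x ^ 4 ≤ 2150 * 1.3428 ^ 4 := by gcongr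
  have t2 : 540 * π ^ 6 * (π - 2) * x ^ 2 ≤ 592700 * 1.3428 ^ 2 := by gcongr
  norm_num at t6 t4 t2
  linarith [pi_pow_nine_gt]
end

section
/- For all x in (0, c] with c = -((π³-60(π-2))π³)/(240(π³-24(π-2))), the function F₁(x) = ln(sin x) - ln x - θ₁(x)·ln(2/π + ((π-2)/π³)(π²-4x²)) is positive, where θ₁(x) = ((π³-60π+120)/(720(π-2)))x² + π³/(24(π-2)). -/
/-!
Write `u = x²` and `k = 4(π - 2)/π³`. Then the argument of the second logarithm is `1 - k u`
and `θ₁ = (1 + u/30 - k u/2)/(6k)`, which is exactly the choice making the Taylor expansions of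
`log (sin x / x)` and `θ₁ log (1 - k u)` agree up to order `u²`. Bounding `sin x / x` below by
`1 - s` with `s = u/6 - u²/120 + u³/5040`, `log (1 - s)` below and `log (1 - k u)` above by
truncated logarithmic series, the difference is at least `u³ k Q(u, k)` for an explicit
polynomial `Q` that stays positive for `u ≤ 2` and `k ∈ [0.145, 0.149]`.
-/

open Real Finset

theorem le_of_hasDerivAt_le {f g f' g' : ℝ → ℝ} (hf : ∀ t, HasDerivAt f (f' t) t)
    (hg : ∀ t, HasDerivAt g (g' t) t) (h₀ : f 0 ≤ g 0) (h' : ∀ t, 0 ≤ t → f' t ≤ g' t)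
    {x : ℝ} (hx : 0 ≤ x) : f x ≤ g x :=
  image_le_of_deriv_right_le_deriv_boundary
    (fun t _ => (hf t).continuousAt.continuousWithinAt) (fun t _ => (hf t).hasDerivWithinAt) h₀
    (fun t _ => (hg t).continuousAt.continuousWithinAt) (fun t _ => (hg t).hasDerivWithinAt)
    (fun t ht => h' t ht.1) ⟨hx, le_rfl⟩

namespace Real

theorem cos_le_taylor_four {x : ℝ} (hx : 0 ≤ x) : cos x ≤ 1 - x ^ 2 / 2 + x ^ 4 / 24 := by
  refine le_of_hasDerivAt_le (g := fun t => 1 - t ^ 2 / 2 + t ^ 4 / 24)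
    (g' := fun t => -t + t ^ 3 / 6) hasDerivAt_cos (fun t => ?_) (by norm_num)
    (fun t ht => by linarith [sin_ge_sub_cube ht]) hx
  exact ((((hasDerivAt_pow 2 t).div_const 2).const_sub 1).add
    ((hasDerivAt_pow 4 t).div_const 24)).congr_deriv (by push_cast; ring)

theorem sin_le_taylor_five {x : ℝ} (hx : 0 ≤ x) : sin x ≤ x - x ^ 3 / 6 + x ^ 5 / 120 := by
  refine le_of_hasDerivAt_le (g := fun t => t - t ^ 3 / 6 + t ^ 5 / 120)
    (g' := fun t => 1 - t ^ 2 / 2 + t ^ 4 / 24) hasDerivAt_sin (fun t => ?_) (by norm_num)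
    (fun t ht => cos_le_taylor_four ht) hx
  exact (((hasDerivAt_id' t).sub ((hasDerivAt_pow 3 t).div_const 6)).add
    ((hasDerivAt_pow 5 t).div_const 120)).congr_deriv (by push_cast; ring)

theorem taylor_six_le_cos {x : ℝ} (hx : 0 ≤ x) :
    1 - x ^ 2 / 2 + x ^ 4 / 24 - x ^ 6 / 720 ≤ cos x := by
  refine le_of_hasDerivAt_le (f := fun t => 1 - t ^ 2 / 2 + t ^ 4 / 24 - t ^ 6 / 720)
    (f' := fun t => -(t - t ^ 3 / 6 + t ^ 5 / 120)) (fun t => ?_) hasDerivAt_cos (by norm_num)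
    (fun t ht => neg_le_neg (sin_le_taylor_five ht)) hx
  exact (((((hasDerivAt_pow 2 t).div_const 2).const_sub 1).add
    ((hasDerivAt_pow 4 t).div_const 24)).sub ((hasDerivAt_pow 6 t).div_const 720)).congr_deriv
    (by push_cast; ring)

theorem taylor_seven_le_sin {x : ℝ} (hx : 0 ≤ x) :
    x - x ^ 3 / 6 + x ^ 5 / 120 - x ^ 7 / 5040 ≤ sin x := by
  refine le_of_hasDerivAt_le (f := fun t => t - t ^ 3 / 6 + t ^ 5 / 120 - t ^ 7 / 5040)
    (f' := fun t => 1 - t ^ 2 / 2 + t ^ 4 / 24 - t ^ 6 / 720) (fun t => ?_) hasDerivAt_sin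
    (by norm_num) (fun t ht => taylor_six_le_cos ht) hx
  exact ((((hasDerivAt_id' t).sub ((hasDerivAt_pow 3 t).div_const 6)).add
    ((hasDerivAt_pow 5 t).div_const 120)).sub ((hasDerivAt_pow 7 t).div_const 5040)).congr_deriv
    (by push_cast; ring)

theorem log_one_sub_le_neg_sum_range {y : ℝ} (h₀ : 0 ≤ y) (h₁ : y < 1) (n : ℕ) :
    log (1 - y) ≤ -∑ i ∈ range n, y ^ (i + 1) / (i + 1) :=
  le_neg_of_le_neg <| sum_le_hasSum _ (fun i _ => by positivity)
    (hasSum_pow_div_log_of_abs_lt_one (by rwa [abs_of_nonneg h₀]))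

theorem neg_sum_range_sub_le_log_one_sub {y : ℝ} (h₀ : 0 ≤ y) (h₁ : y < 1) (n : ℕ) :
    -∑ i ∈ range n, y ^ (i + 1) / (i + 1) - y ^ (n + 1) / ((n + 1) * (1 - y)) ≤ log (1 - y) := by
  have hlog := hasSum_pow_div_log_of_abs_lt_one (by rwa [abs_of_nonneg h₀] : |y| < 1)
  have htail := (hasSum_nat_add_iff' n).mpr hlog
  have hgeom := (hasSum_geometric_of_lt_one h₀ h₁).mul_left (y ^ (n + 1) / (n + 1))
  have hle := hasSum_le (fun i => ?_) htail hgeom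
  · rw [div_mul_eq_div_div, div_eq_mul_inv (y ^ (n + 1) / (n + 1))]
    linarith
  · rw [div_mul_eq_mul_div, ← pow_add, add_comm (n + 1) i, ← add_assoc]
    push_cast
    exact div_le_div_of_nonneg_left (by positivity) (by positivity)
      (by linarith [i.cast_nonneg (α := ℝ)])

theorem log_one_sub_ge_of_le_third {s : ℝ} (h₀ : 0 ≤ s) (h₁ : s ≤ 1 / 3) :
    -(s + s ^ 2 / 2 + s ^ 3 / 3) - 3 * s ^ 4 / 8 ≤ log (1 - s) := by
  have h := neg_sum_range_sub_le_log_one_sub h₀ (by linarith) 3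
  norm_num [sum_range_succ] at h
  have hrem : s ^ 4 / (4 * (1 - s)) ≤ 3 * s ^ 4 / 8 := by
    rw [div_le_iff₀ (by linarith)]; nlinarith [pow_nonneg h₀ 4]
  linarith

end Real

theorem log_series_lt_theta_mul_log_series {k u s : ℝ} (hk₀ : 0.145 ≤ k) (hk₁ : k ≤ 0.149)
    (hu₀ : 0 < u) (hu₁ : u ≤ 2) (hs : s = u / 6 - u ^ 2 / 120 + u ^ 3 / 5040) :
    s + s ^ 2 / 2 + s ^ 3 / 3 + u ^ 4 / 3456 <
      (1 + u / 30 - k * u / 2) / (6 * k) *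
        (k * u + (k * u) ^ 2 / 2 + (k * u) ^ 3 / 3 + (k * u) ^ 4 / 4) := by
  have hk : 0 < k := by linarith
  have c₃ : 0.002 ≤ k ^ 2 / 12 + k / 60 - 2 / 945 := by nlinarith
  have c₄ : -0.00027 ≤ k ^ 3 / 12 + k ^ 2 / 90 - 19 / 25200 := by nlinarith
  have c₅ : -0.00013 ≤ k ^ 3 / 120 - k ^ 4 / 8 - 1 / 10800 := by nlinarith
  set Q := (k ^ 2 / 12 + k / 60 - 2 / 945) + (k ^ 3 / 12 + k ^ 2 / 90 - 19 / 25200) * u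
      + (k ^ 3 / 120 - k ^ 4 / 8 - 1 / 10800) * u ^ 2 + 23 / 5292000 * u ^ 3
      - 31 / 254016000 * u ^ 4 + u ^ 5 / 508032000 - u ^ 6 / 64012032000 with hQ_def
  have hQ : 0 < Q := by
    have hu₂ : u ^ 2 ≤ 4 := by nlinarith
    have hu₄ : u ^ 4 ≤ 16 := by nlinarith
    have hu₆ : u ^ 6 ≤ 64 := by nlinarith
    nlinarith [mul_le_mul_of_nonneg_right c₄ hu₀.le, mul_le_mul_of_nonneg_right c₅ (sq_nonneg u),
      pow_pos hu₀ 3, pow_pos hu₀ 5]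
  rw [div_mul_eq_mul_div, lt_div_iff₀ (by positivity)]
  have hgap : (1 + u / 30 - k * u / 2) *
        (k * u + (k * u) ^ 2 / 2 + (k * u) ^ 3 / 3 + (k * u) ^ 4 / 4) -
      (s + s ^ 2 / 2 + s ^ 3 / 3 + u ^ 4 / 3456) * (6 * k) = u ^ 3 * k * Q := by
    rw [hQ_def, hs]; ring
  have := mul_pos (mul_pos (pow_pos hu₀ 3) hk) hQ
  linarith

theorem theta_mul_log_lt_log_sin_div {k x : ℝ} (hk₀ : 0.145 ≤ k) (hk₁ : k ≤ 0.149)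
    (hx₀ : 0 < x) (hx₁ : x ^ 2 ≤ 2) :
    (1 + x ^ 2 / 30 - k * x ^ 2 / 2) / (6 * k) * log (1 - k * x ^ 2) < log (sin x / x) := by
  set u := x ^ 2
  set s := u / 6 - u ^ 2 / 120 + u ^ 3 / 5040 with hs
  have hu₀ : 0 < u := by positivity
  have hs₀ : 0 < s := by nlinarith
  have hs₁ : s ≤ u / 6 := by nlinarith
  have hθ : 0 ≤ (1 + u / 30 - k * u / 2) / (6 * k) := by
    apply div_nonneg <;> nlinarith
  have hsin : 1 - s ≤ sin x / x := by
    rw [le_div_iff₀ hx₀, show (1 - s) * x = x - x ^ 3 / 6 + x ^ 5 / 120 - x ^ 7 / 5040 by ring]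
    exact taylor_seven_le_sin hx₀.le
  calc (1 + u / 30 - k * u / 2) / (6 * k) * log (1 - k * u)
      ≤ (1 + u / 30 - k * u / 2) / (6 * k) * -∑ i ∈ range 4, (k * u) ^ (i + 1) / (i + 1) :=
        mul_le_mul_of_nonneg_left
          (log_one_sub_le_neg_sum_range (by positivity) (by nlinarith) 4) hθ
    _ = -((1 + u / 30 - k * u / 2) / (6 * k) *
          (k * u + (k * u) ^ 2 / 2 + (k * u) ^ 3 / 3 + (k * u) ^ 4 / 4)) := by
        norm_num [sum_range_succ]; ring
    _ < -(s + s ^ 2 / 2 + s ^ 3 / 3 + u ^ 4 / 3456) :=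
        neg_lt_neg (log_series_lt_theta_mul_log_series hk₀ hk₁ hu₀ (by linarith) hs)
    _ ≤ -(s + s ^ 2 / 2 + s ^ 3 / 3) - 3 * s ^ 4 / 8 := by
        have : s ^ 4 ≤ (u / 6) ^ 4 := by gcongr
        linarith
    _ ≤ log (1 - s) := log_one_sub_ge_of_le_third hs₀.le (by linarith)
    _ ≤ log (sin x / x) := log_le_log (by linarith) hsin

theorem four_mul_pi_sub_two_div_pi_pow_three_bounds :
    0.145 ≤ 4 * (π - 2) / π ^ 3 ∧ 4 * (π - 2) / π ^ 3 ≤ 0.149 := by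
  have h₀ := pi_gt_d2
  have h₁ := pi_lt_d2
  have hcube₀ : 3.14 ^ 3 < π ^ 3 := by gcongr
  have hcube₁ : π ^ 3 < 3.15 ^ 3 := by gcongr
  constructor
  · rw [le_div_iff₀ (by positivity)]; linarith
  · rw [div_le_iff₀ (by positivity)]; linarith

theorem F1_endpoint_le :
    -((π ^ 3 - 60 * (π - 2)) * π ^ 3) / (240 * (π ^ 3 - 24 * (π - 2))) ≤ 1.414 := by
  have h₀ := pi_gt_d2
  have h₁ := pi_lt_d2
  have hcube₀ : 3.14 ^ 3 < π ^ 3 := by gcongr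
  have hcube₁ : π ^ 3 < 3.15 ^ 3 := by gcongr
  rw [div_le_iff₀ (by norm_num at *; nlinarith)]
  nlinarith [mul_pos (sub_pos.2 h₀) (sub_pos.2 h₁), mul_pos (sub_pos.2 hcube₀) (sub_pos.2 hcube₁),
    mul_pos (sub_pos.2 h₀) (sub_pos.2 hcube₁), mul_pos (sub_pos.2 hcube₀) (sub_pos.2 h₁)]

theorem F1_pos (x : ℝ) (hx : 0 < x)
    (hx' : x ≤ -((π ^ 3 - 60 * (π - 2)) * π ^ 3) / (240 * (π ^ 3 - 24 * (π - 2)))) :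
    Real.log (Real.sin x) - Real.log x -
      ((π ^ 3 - 60 * π + 120) / (720 * (π - 2)) * x ^ 2 + π ^ 3 / (24 * (π - 2))) *
        Real.log (2 / π + (π - 2) / π ^ 3 * (π ^ 2 - 4 * x ^ 2)) > 0 := by
  obtain ⟨hk₀, hk₁⟩ := four_mul_pi_sub_two_div_pi_pow_three_bounds
  have hx₁ : x ^ 2 ≤ 2 := by nlinarith [F1_endpoint_le]
  have hπ₂ : π - 2 ≠ 0 := by linarith [pi_gt_three]
  have harg :
      2 / π + (π - 2) / π ^ 3 * (π ^ 2 - 4 * x ^ 2) = 1 - 4 * (π - 2) / π ^ 3 * x ^ 2 := by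
    field_simp; ring
  have hθ : (π ^ 3 - 60 * π + 120) / (720 * (π - 2)) * x ^ 2 + π ^ 3 / (24 * (π - 2)) =
      (1 + x ^ 2 / 30 - 4 * (π - 2) / π ^ 3 * x ^ 2 / 2) / (6 * (4 * (π - 2) / π ^ 3)) := by
    field_simp; ring
  have hsin : 0 < sin x := sin_pos_of_pos_of_lt_pi hx (by nlinarith [pi_gt_three])
  rw [harg, hθ, gt_iff_lt, sub_pos, ← log_div hsin.ne' hx.ne']
  exact theta_mul_log_lt_log_sin_div hk₀ hk₁ hx hx₁
end

section
/- The limits of F₁(x), F₁'(x), and F₁''(x) as x → 0⁺ are all equal to 0, where F₁(x) = ln(sin x) - ln x - θ₁(x)·ln(2/π + ((π-2)/π³)(π²-4x²)) and θ₁(x) = ((π³-60π+120)/(720(π-2)))x² + π³/(24(π-2)). -/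
/-!
With `a = 4(π - 2)/π³` the argument of the second logarithm is `1 - a x²`, so
`F₁ = (log ∘ sin - log) - P` with `P x = θ₁(x) log (1 - a x²)`. The function `P` is smooth at `0`
with `P 0 = P' 0 = 0` and `P'' 0 = -2 a θ₁(0) = -1/3`. On the other side `log (sin x) - log x`
has derivatives `cot x - 1/x → 0` and `1/x² - 1/sin² x → -1/3`, by `sin x = x - x³/6 + O(x⁵)`.
The constant term of `θ₁` is exactly the one for which the two second-derivative limits cancel.
-/

open Real Filter

noncomputable def F₁ (x : ℝ) : ℝ :=
  Real.log (Real.sin x) - Real.log x -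
    ((π ^ 3 - 60 * π + 120) / (720 * (π - 2)) * x ^ 2 + π ^ 3 / (24 * (π - 2))) *
      Real.log (2 / π + (π - 2) / π ^ 3 * (π ^ 2 - 4 * x ^ 2))

open Topology

section DerivSub

variable {𝕜 F : Type*} [NontriviallyNormedField 𝕜] [NormedAddCommGroup F] [NormedSpace 𝕜 F]
  {f g : 𝕜 → F} {l : Filter 𝕜} {u v : F}

theorem tendsto_deriv_sub (hfg : ∀ᶠ x in l, DifferentiableAt 𝕜 f x ∧ DifferentiableAt 𝕜 g x)
    (hf : Tendsto (deriv f) l (𝓝 u)) (hg : Tendsto (deriv g) l (𝓝 v)) :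
    Tendsto (deriv (f - g)) l (𝓝 (u - v)) := by
  refine (hf.sub hg).congr' ?_
  filter_upwards [hfg] with x ⟨hfx, hgx⟩
  exact (deriv_sub hfx hgx).symm

theorem tendsto_deriv_deriv_sub (hfg : ∀ᶠ x in l, ContDiffAt 𝕜 2 f x ∧ ContDiffAt 𝕜 2 g x)
    (hf : Tendsto (deriv (deriv f)) l (𝓝 u)) (hg : Tendsto (deriv (deriv g)) l (𝓝 v)) :
    Tendsto (deriv (deriv (f - g))) l (𝓝 (u - v)) := by
  refine (hf.sub hg).congr' ?_
  filter_upwards [hfg] with x ⟨hfx, hgx⟩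
  simpa [iteratedDeriv_succ, iteratedDeriv_one] using (iteratedDeriv_sub hfx hgx).symm

end DerivSub

theorem tendsto_sin_div_self_nhdsNE :
    Tendsto (fun x => sin x / x) (𝓝[≠] 0) (𝓝 1) := by
  have h := (continuous_sinc.tendsto 0).mono_left (nhdsWithin_le_nhds (s := {0}ᶜ))
  rw [sinc_zero] at h
  refine h.congr' ?_
  filter_upwards [self_mem_nhdsWithin] with x hx
  exact sinc_of_ne_zero hx

theorem tendsto_cos_sub_one_div_self_nhdsNE :
    Tendsto (fun x => (cos x - 1) / x) (𝓝[≠] 0) (𝓝 0) := by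
  simpa [div_eq_inv_mul] using (hasDerivAt_cos 0).tendsto_slope_zero

theorem tendsto_sin_sub_self_div_pow_three_nhdsNE :
    Tendsto (fun x => (sin x - x) / x ^ 3) (𝓝[≠] 0) (𝓝 (-(1 / 6))) := by
  have hrem : Tendsto (fun x => (sin x - (x - x ^ 3 / 6)) / x ^ 3) (𝓝[≠] 0) (𝓝 0) := by
    have hx2 : Tendsto (fun x : ℝ => x ^ 2 / 100) (𝓝[≠] 0) (𝓝 0) :=
      (Continuous.tendsto' (by fun_prop) 0 0 (by simp)).mono_left nhdsWithin_le_nhds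
    refine squeeze_zero_norm' ?_ hx2
    filter_upwards [self_mem_nhdsWithin,
      nhdsWithin_le_nhds (Metric.closedBall_mem_nhds (0 : ℝ) one_pos)] with x hx0 hx1
    have hx0 : x ≠ 0 := hx0
    have hx1 : |x| ≤ 1 := by simpa using hx1
    rw [Real.norm_eq_abs, abs_div, abs_pow, div_le_iff₀ (by positivity)]
    calc |sin x - (x - x ^ 3 / 6)| ≤ |x| ^ 5 / 100 := sin_bound hx1
      _ = x ^ 2 / 100 * |x| ^ 3 := by rw [← sq_abs x]; ring
  rw [← zero_add (-(1 / 6) : ℝ)]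
  refine (hrem.add_const _).congr' ?_
  filter_upwards [self_mem_nhdsWithin] with x hx
  have hx : x ≠ 0 := hx
  field_simp
  ring

theorem hasDerivAt_log_sin_sub_log {x : ℝ} (hx : x ≠ 0) (hs : sin x ≠ 0) :
    HasDerivAt (fun y => log (sin y) - log y) (cos x / sin x - x⁻¹) x :=
  ((hasDerivAt_sin x).log hs).sub (hasDerivAt_log hx)

theorem hasDerivAt_cos_div_sin_sub_inv {x : ℝ} (hx : x ≠ 0) (hs : sin x ≠ 0) :
    HasDerivAt (fun y => cos y / sin y - y⁻¹) ((x ^ 2)⁻¹ - (sin x ^ 2)⁻¹) x := by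
  refine (((hasDerivAt_cos x).div (hasDerivAt_sin x) hs).sub (hasDerivAt_inv hx)).congr_deriv ?_
  field_simp
  linear_combination (-x ^ 2) * sin_sq_add_cos_sq x

theorem contDiffAt_log_sin_sub_log {n : WithTop ℕ∞} {x : ℝ} (hx : x ≠ 0) (hs : sin x ≠ 0) :
    ContDiffAt ℝ n (fun y => log (sin y) - log y) x :=
  (contDiff_sin.contDiffAt.log hs).sub (contDiffAt_log.2 hx)

theorem eventually_nhds_ne_zero_and_sin_ne_zero :
    ∀ᶠ x in 𝓝[≠] (0 : ℝ), ∀ᶠ y in 𝓝 x, y ≠ 0 ∧ sin y ≠ 0 := by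
  have hopen : IsOpen {y : ℝ | y ≠ 0 ∧ sin y ≠ 0} :=
    isOpen_ne.inter (isOpen_ne_fun continuous_sin continuous_const)
  filter_upwards [self_mem_nhdsWithin, tendsto_sin_div_self_nhdsNE.eventually_ne one_ne_zero]
    with x hx hsx
  exact hopen.mem_nhds ⟨hx, (div_ne_zero_iff.1 hsx).1⟩

theorem deriv_log_sin_sub_log_eventuallyEq :
    deriv (fun y => log (sin y) - log y) =ᶠ[𝓝[≠] 0] fun x => cos x / sin x - x⁻¹ := by
  filter_upwards [eventually_nhds_ne_zero_and_sin_ne_zero] with x hx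
  exact (hasDerivAt_log_sin_sub_log hx.self_of_nhds.1 hx.self_of_nhds.2).deriv

theorem deriv_deriv_log_sin_sub_log_eventuallyEq :
    deriv (deriv (fun y => log (sin y) - log y)) =ᶠ[𝓝[≠] 0]
      fun x => (x ^ 2)⁻¹ - (sin x ^ 2)⁻¹ := by
  filter_upwards [eventually_nhds_ne_zero_and_sin_ne_zero] with x hx
  have hderiv : deriv (fun y => log (sin y) - log y) =ᶠ[𝓝 x] fun y => cos y / sin y - y⁻¹ :=
    hx.mono fun y hy => (hasDerivAt_log_sin_sub_log hy.1 hy.2).deriv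
  rw [hderiv.deriv_eq]
  exact (hasDerivAt_cos_div_sin_sub_inv hx.self_of_nhds.1 hx.self_of_nhds.2).deriv

theorem tendsto_log_sin_sub_log :
    Tendsto (fun x => log (sin x) - log x) (𝓝[≠] 0) (𝓝 0) := by
  have h := ((continuousAt_log one_ne_zero).tendsto.comp tendsto_sin_div_self_nhdsNE)
  rw [log_one] at h
  refine h.congr' ?_
  filter_upwards [eventually_nhds_ne_zero_and_sin_ne_zero] with x hx
  exact log_div hx.self_of_nhds.2 hx.self_of_nhds.1

theorem tendsto_deriv_log_sin_sub_log :
    Tendsto (deriv fun x => log (sin x) - log x) (𝓝[≠] 0) (𝓝 0) := by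
  have hid : Tendsto (fun x : ℝ => x) (𝓝[≠] 0) (𝓝 0) :=
    tendsto_nhdsWithin_of_tendsto_nhds tendsto_id
  have h := (tendsto_cos_sub_one_div_self_nhdsNE.sub
    (tendsto_sin_sub_self_div_pow_three_nhdsNE.mul hid)).mul
    (tendsto_sin_div_self_nhdsNE.inv₀ one_ne_zero)
  rw [mul_zero, sub_zero, zero_mul] at h
  refine h.congr' ?_
  filter_upwards [eventually_nhds_ne_zero_and_sin_ne_zero, deriv_log_sin_sub_log_eventuallyEq]
    with x hx hderiv
  obtain ⟨hx0, hs⟩ := hx.self_of_nhds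
  rw [hderiv]
  field_simp
  ring

theorem tendsto_deriv_deriv_log_sin_sub_log :
    Tendsto (deriv (deriv fun x => log (sin x) - log x)) (𝓝[≠] 0) (𝓝 (-(1 / 3))) := by
  have h := (tendsto_sin_sub_self_div_pow_three_nhdsNE.mul
    (tendsto_sin_div_self_nhdsNE.add_const 1)).mul
    ((tendsto_sin_div_self_nhdsNE.inv₀ one_ne_zero).pow 2)
  norm_num at h
  refine h.congr' ?_
  filter_upwards [eventually_nhds_ne_zero_and_sin_ne_zero, deriv_deriv_log_sin_sub_log_eventuallyEq]
    with x hx hderiv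
  obtain ⟨hx0, hs⟩ := hx.self_of_nhds
  rw [hderiv]
  field_simp
  ring

noncomputable def quadLog (a b c x : ℝ) : ℝ := (b * x ^ 2 + c) * log (1 - a * x ^ 2)

section quadLog

variable (a b c : ℝ)

theorem contDiffAt_quadLog {n : WithTop ℕ∞} {x : ℝ} (hx : 1 - a * x ^ 2 ≠ 0) :
    ContDiffAt ℝ n (quadLog a b c) x := by
  unfold quadLog
  fun_prop (disch := exact hx)

theorem hasDerivAt_quadLog {x : ℝ} (hx : 1 - a * x ^ 2 ≠ 0) :
    HasDerivAt (quadLog a b c)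
      (x * (2 * b * log (1 - a * x ^ 2) - 2 * a * (b * x ^ 2 + c) / (1 - a * x ^ 2))) x := by
  have hθ : HasDerivAt (fun y => b * y ^ 2 + c) (b * (2 * x)) x := by
    simpa using ((hasDerivAt_pow 2 x).const_mul b).add_const c
  have hg : HasDerivAt (fun y => 1 - a * y ^ 2) (-(a * (2 * x))) x := by
    simpa using ((hasDerivAt_pow 2 x).const_mul a).const_sub 1
  refine (hθ.mul (hg.log hx)).congr_deriv ?_
  field_simp
  ring

theorem eventually_one_sub_mul_sq_ne_zero : ∀ᶠ x in 𝓝 (0 : ℝ), 1 - a * x ^ 2 ≠ 0 :=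
  (Continuous.continuousAt (by fun_prop)).eventually_ne (by simp)

theorem quadLog_zero : quadLog a b c 0 = 0 := by simp [quadLog]

theorem deriv_quadLog_zero : deriv (quadLog a b c) 0 = 0 := by
  simpa using (hasDerivAt_quadLog a b c (x := 0) (by simp)).deriv

theorem deriv_deriv_quadLog_zero : deriv (deriv (quadLog a b c)) 0 = -(2 * a * c) := by
  have hderiv : deriv (quadLog a b c) =ᶠ[𝓝 0] fun x =>
      x * (2 * b * log (1 - a * x ^ 2) - 2 * a * (b * x ^ 2 + c) / (1 - a * x ^ 2)) :=
    (eventually_one_sub_mul_sq_ne_zero a).mono fun x hx => (hasDerivAt_quadLog a b c hx).deriv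
  rw [hderiv.deriv_eq, deriv_fun_mul differentiableAt_id (by fun_prop (disch := simp))]
  simp

theorem tendsto_quadLog : Tendsto (quadLog a b c) (𝓝 0) (𝓝 0) := by
  have h := (contDiffAt_quadLog a b c (n := 0) (x := 0) (by simp)).continuousAt.tendsto
  rwa [quadLog_zero] at h

theorem tendsto_deriv_quadLog : Tendsto (deriv (quadLog a b c)) (𝓝 0) (𝓝 0) := by
  have h := ((contDiffAt_quadLog a b c (n := 1) (x := 0) (by simp)).derivWithin
    (m := 0) le_rfl).continuousAt.tendsto
  rwa [deriv_quadLog_zero] at h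

theorem tendsto_deriv_deriv_quadLog :
    Tendsto (deriv (deriv (quadLog a b c))) (𝓝 0) (𝓝 (-(2 * a * c))) := by
  have h := (((contDiffAt_quadLog a b c (n := 2) (x := 0) (by simp)).derivWithin
    (m := 1) (by norm_num)).derivWithin (m := 0) le_rfl).continuousAt.tendsto
  rwa [deriv_deriv_quadLog_zero] at h

end quadLog

theorem F₁_eq_sub_quadLog :
    F₁ = (fun x => log (sin x) - log x) - quadLog (4 * (π - 2) / π ^ 3)
      ((π ^ 3 - 60 * π + 120) / (720 * (π - 2))) (π ^ 3 / (24 * (π - 2))) := by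
  funext x
  have hπ : π ≠ 0 := pi_ne_zero
  have hlog : 2 / π + (π - 2) / π ^ 3 * (π ^ 2 - 4 * x ^ 2) = 1 - 4 * (π - 2) / π ^ 3 * x ^ 2 := by
    field_simp
    ring
  simp only [F₁, quadLog, Pi.sub_apply, hlog]

theorem F1_limits :
    Tendsto F₁ (nhdsWithin 0 (Set.Ioi 0)) (nhds 0) ∧
    Tendsto (deriv F₁) (nhdsWithin 0 (Set.Ioi 0)) (nhds 0) ∧
    Tendsto (deriv (deriv F₁)) (nhdsWithin 0 (Set.Ioi 0)) (nhds 0) := by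
  rw [F₁_eq_sub_quadLog]
  set a := 4 * (π - 2) / π ^ 3
  set b := (π ^ 3 - 60 * π + 120) / (720 * (π - 2))
  set c := π ^ 3 / (24 * (π - 2))
  have hac : 2 * a * c = 1 / 3 := by
    have : π - 2 ≠ 0 := by linarith [pi_gt_three]
    simp only [a, c]
    field_simp [pi_ne_zero]
    ring
  have hsmooth : ∀ᶠ x in 𝓝[>] 0,
      ContDiffAt ℝ 2 (fun y => log (sin y) - log y) x ∧ ContDiffAt ℝ 2 (quadLog a b c) x := by
    filter_upwards [eventually_nhds_ne_zero_and_sin_ne_zero.filter_mono (nhdsGT_le_nhdsNE 0),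
      nhdsWithin_le_nhds (eventually_one_sub_mul_sq_ne_zero a)] with x hL hP
    exact ⟨contDiffAt_log_sin_sub_log hL.self_of_nhds.1 hL.self_of_nhds.2,
      contDiffAt_quadLog a b c hP⟩
  have hL : 𝓝[>] (0 : ℝ) ≤ 𝓝[≠] 0 := nhdsGT_le_nhdsNE 0
  have hP : 𝓝[>] (0 : ℝ) ≤ 𝓝 0 := nhdsWithin_le_nhds
  refine ⟨?_, ?_, ?_⟩
  · have h := (tendsto_log_sin_sub_log.mono_left hL).sub ((tendsto_quadLog a b c).mono_left hP)
    rwa [sub_zero] at h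
  · simpa using tendsto_deriv_sub
      (hsmooth.mono fun x h => ⟨h.1.differentiableAt two_ne_zero, h.2.differentiableAt two_ne_zero⟩)
      (tendsto_deriv_log_sin_sub_log.mono_left hL) ((tendsto_deriv_quadLog a b c).mono_left hP)
  · have h := tendsto_deriv_deriv_sub hsmooth (tendsto_deriv_deriv_log_sin_sub_log.mono_left hL)
      ((tendsto_deriv_deriv_quadLog a b c).mono_left hP)
    rwa [hac, sub_neg_eq_add, neg_add_cancel] at h
end

section
/- Let ω(x) = -((π³-24π+48)(π/2 - x)³)/(3(π-2)π³) + π³/(24π-48) and ω₁(x) = x/5 + 1. Then ω(x) > ω₁(x) for all x in (0, c₁), where c₁ = π/2 - c and c = -((π³-60(π-2))π³)/(240(π³-24(π-2))). -/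
/-!
With `K = π³ - 24π + 48 > 0`, expanding the cube gives
`ω x - ω₁ x = x · (20K x² - 30πK x + C) / (60(π - 2)π³)` with a constant `C > 0`.
The quadratic factor is at least its affine part `C - 30πK x`, which stays positive up to
`x = 23/100`, just beyond `c₁ ≈ 0.228`; the numerical facts follow from `π ∈ (3.141592, 3.141593)`.
-/

open Real

noncomputable def ω (x : ℝ) : ℝ :=
  -((π ^ 3 - 24 * π + 48) * (π / 2 - x) ^ 3) / (3 * (π - 2) * π ^ 3) + π ^ 3 / (24 * π - 48)

noncomputable def ω₁ (x : ℝ) : ℝ := x / 5 + 1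

noncomputable def c₁ : ℝ :=
  π / 2 + (π ^ 3 - 60 * (π - 2)) * π ^ 3 / (240 * (π ^ 3 - 24 * (π - 2)))

noncomputable def gapQuadratic (x : ℝ) : ℝ :=
  20 * (π ^ 3 - 24 * π + 48) * x ^ 2 - 30 * π * (π ^ 3 - 24 * π + 48) * x +
    (15 * π ^ 5 - 12 * π ^ 4 - 336 * π ^ 3 + 720 * π ^ 2)

lemma two_lt_pi : 2 < π := by linarith [pi_gt_three]

lemma pi_cubic_pos : 0 < π ^ 3 - 24 * π + 48 := by
  nlinarith [pi_gt_d6, pi_lt_d6, sq_nonneg (π - 3.141592)]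

lemma c₁_lt : c₁ < 23 / 100 := by
  have hden : 0 < 240 * (π ^ 3 - 24 * (π - 2)) := by linarith [pi_cubic_pos]
  suffices (π ^ 3 - 60 * (π - 2)) * π ^ 3 / (240 * (π ^ 3 - 24 * (π - 2))) < 23 / 100 - π / 2 by
    unfold c₁; linarith
  rw [div_lt_iff₀ hden]
  nlinarith [pi_gt_d6, pi_lt_d6, sq_nonneg (π - 3.141592), sq_nonneg (π ^ 2 - 9.8696),
    sq_nonneg (π ^ 3 - 31.00627), sq_nonneg ((π - 3.141592) * π),
    sq_nonneg ((π - 3.141592) * π ^ 2)]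

lemma omega_sub_omega₁ (x : ℝ) :
    ω x - ω₁ x = x * gapQuadratic x / (60 * (π - 2) * π ^ 3) := by
  have hπ : π - 2 ≠ 0 := sub_ne_zero.2 two_lt_pi.ne'
  unfold ω ω₁ gapQuadratic
  rw [show 24 * π - 48 = 24 * (π - 2) by ring]
  field_simp
  ring

lemma gapQuadratic_pos {x : ℝ} (hx : x ≤ 23 / 100) : 0 < gapQuadratic x := by
  have hK := pi_cubic_pos
  have hlin : 0 < -30 * π * (π ^ 3 - 24 * π + 48) * (23 / 100) +
      (15 * π ^ 5 - 12 * π ^ 4 - 336 * π ^ 3 + 720 * π ^ 2) := by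
    nlinarith [pi_gt_d6, pi_lt_d6, sq_nonneg (π - 3.141592), sq_nonneg (π ^ 2 - 9.8696),
      sq_nonneg (π ^ 3 - 31.00627), sq_nonneg ((π - 3.141592) * π),
      sq_nonneg ((π - 3.141592) * π ^ 2)]
  have hslope : 0 < 30 * π * (π ^ 3 - 24 * π + 48) := by positivity
  unfold gapQuadratic
  nlinarith [mul_le_mul_of_nonneg_left hx hslope.le, sq_nonneg x]

theorem omega_gt_omega1 (x : ℝ) (hx : 0 < x)
    (hx' : x < π / 2 + (π ^ 3 - 60 * (π - 2)) * π ^ 3 / (240 * (π ^ 3 - 24 * (π - 2)))) :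
    -((π ^ 3 - 24 * π + 48) * (π / 2 - x) ^ 3) / (3 * (π - 2) * π ^ 3) +
        π ^ 3 / (24 * π - 48) > x / 5 + 1 := by
  have hQ : 0 < gapQuadratic x := gapQuadratic_pos (hx'.trans c₁_lt).le
  have hden : 0 < 60 * (π - 2) * π ^ 3 := by
    have := sub_pos.2 two_lt_pi
    positivity
  have hgap : 0 < ω x - ω₁ x := by
    rw [omega_sub_omega₁]
    exact div_pos (mul_pos hx hQ) hden
  exact sub_pos.1 hgap
end

section
/- Define P(x) as the degree-6 polynomial with the coefficients from G₁'' (as in the proof of Nishizawa's open problem), and Q(x) = 5(π-2x)²((-2π+4)x² + (2π²-4π)x + π²)². Then P(x)·cos²x - Q(x)·sin²x > 0 for all x in (0, c₁), where c₁ = π/2 + ((π³-60(π-2))π³)/(240(π³-24(π-2))). -/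
/-!
Since `cos² x = 1 - sin² x`, `sin² x ≤ x²` and `Q ≥ 0`, it suffices that `Q(x) x² < P(x) (1 - x²)`.
The difference is a polynomial of degree 7 in `x` (the `x⁸` terms cancel) whose coefficients are
polynomials in `π`. The bounds `3.141592 < π < 3.141593` bound each coefficient below by an
integer, and the resulting integer polynomial has positive Bernstein coefficients on
`[0, 23/100]`, an interval containing `(0, c₁)` since `c₁ ≈ 0.2284`.
-/

open Real

lemma mul_cos_sq_sub_mul_sin_sq_pos {a b x : ℝ} (hb : 0 ≤ b) (hx : x ^ 2 ≤ 1)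
    (h : b * x ^ 2 < a * (1 - x ^ 2)) : 0 < a * cos x ^ 2 - b * sin x ^ 2 := by
  have ha : 0 < a := by nlinarith
  have hsin : sin x ^ 2 ≤ x ^ 2 := sin_sq_le_sq
  rw [cos_sq']
  nlinarith

namespace Nishizawa

noncomputable def c₁ : ℝ :=
  π / 2 + (π ^ 3 - 60 * (π - 2)) * π ^ 3 / (240 * (π ^ 3 - 24 * (π - 2)))

noncomputable def P (x : ℝ) : ℝ :=
  (-80 * π ^ 2 + 320 * π - 320) * x ^ 6 +
    (240 * π ^ 3 - 992 * π ^ 2 + 1088 * π - 128) * x ^ 5 +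
    (-260 * π ^ 4 + 1216 * π ^ 3 - 1344 * π ^ 2 - 576 * π + 960) * x ^ 4 +
    (120 * π ^ 5 - 728 * π ^ 4 + 720 * π ^ 3 + 1472 * π ^ 2 - 1920 * π) * x ^ 3 +
    (-20 * π ^ 6 + 212 * π ^ 5 - 132 * π ^ 4 - 1184 * π ^ 3 + 1440 * π ^ 2) * x ^ 2 +
    (-24 * π ^ 6 - 16 * π ^ 5 + 408 * π ^ 4 - 480 * π ^ 3) * x +
    11 * π ^ 6 - 52 * π ^ 5 + 60 * π ^ 4

noncomputable def Q (x : ℝ) : ℝ :=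
  5 * (π - 2 * x) ^ 2 * ((-2 * π + 4) * x ^ 2 + (2 * π ^ 2 - 4 * π) * x + π ^ 2) ^ 2

lemma le_pi_pow (k : ℕ) : (3.141592 : ℝ) ^ k ≤ π ^ k :=
  pow_le_pow_left₀ (by norm_num) pi_gt_d6.le k

lemma pi_pow_le (k : ℕ) : π ^ k ≤ (3.141593 : ℝ) ^ k :=
  pow_le_pow_left₀ pi_pos.le pi_lt_d6.le k

lemma c₁_lt : c₁ < 23 / 100 := by
  have hD : 0 < 240 * (π ^ 3 - 24 * (π - 2)) := by
    linarith [le_pi_pow 3, pi_pow_le 1]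
  rw [c₁, ← lt_sub_iff_add_lt', div_lt_iff₀ hD]
  linarith [le_pi_pow 1, le_pi_pow 2, le_pi_pow 3, le_pi_pow 4, le_pi_pow 6,
    pi_pow_le 1, pi_pow_le 2, pi_pow_le 3, pi_pow_le 4, pi_pow_le 6]

noncomputable def coeff : Fin 8 → ℝ :=
  ![11 * π ^ 6 - 52 * π ^ 5 + 60 * π ^ 4,
    -24 * π ^ 6 - 16 * π ^ 5 + 408 * π ^ 4 - 480 * π ^ 3,
    -36 * π ^ 6 + 264 * π ^ 5 - 192 * π ^ 4 - 1184 * π ^ 3 + 1440 * π ^ 2,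
    4 * π ^ 6 + 196 * π ^ 5 - 1136 * π ^ 4 + 1200 * π ^ 3 + 1472 * π ^ 2 - 1920 * π,
    -32 * π ^ 5 - 428 * π ^ 4 + 2400 * π ^ 3 - 2784 * π ^ 2 - 576 * π + 960,
    88 * π ^ 4 + 320 * π ^ 3 - 2464 * π ^ 2 + 3008 * π - 128,
    -96 * π ^ 3 + 64 * π ^ 2 + 896 * π - 1280,
    32 * π ^ 2 - 128 * π + 128]

def coeffLowerBound : Fin 8 → ℝ := ![506, -3110, 4977, -1128, -5396, 3497, -811, 41]

lemma P_mul_one_sub_sq_sub_Q_mul_sq (x : ℝ) :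
    P x * (1 - x ^ 2) - Q x * x ^ 2 = ∑ i, coeff i * x ^ (i : ℕ) := by
  simp only [Fin.sum_univ_eight, coeff, P, Q, Matrix.cons_val, Fin.coe_ofNat_eq_mod,
    Nat.reduceMod]
  ring

lemma coeffLowerBound_le (i : Fin 8) : coeffLowerBound i ≤ coeff i := by
  fin_cases i <;> simp only [coeffLowerBound, coeff, Fin.reduceFinMk, Matrix.cons_val] <;>
    linarith [le_pi_pow 1, le_pi_pow 2, le_pi_pow 3, le_pi_pow 4, le_pi_pow 5, le_pi_pow 6,
      pi_pow_le 1, pi_pow_le 2, pi_pow_le 3, pi_pow_le 4, pi_pow_le 5, pi_pow_le 6]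

lemma sum_coeffLowerBound_pos {x : ℝ} (hx₀ : 0 ≤ x) (hx : x ≤ 23 / 100) :
    0 < ∑ i, coeffLowerBound i * x ^ (i : ℕ) := by
  have hB : ∀ i j : ℕ, 0 ≤ x ^ i * (23 / 100 - x) ^ j := fun i j =>
    mul_nonneg (pow_nonneg hx₀ i) (pow_nonneg (by linarith) j)
  simp only [Fin.sum_univ_eight, coeffLowerBound, Matrix.cons_val, Fin.coe_ofNat_eq_mod,
    Nat.reduceMod]
  -- the degree-7 Bernstein basis of `[0, 23/100]`
  linarith [hB 0 7, hB 1 6, hB 2 5, hB 3 4, hB 4 3, hB 5 2, hB 6 1, hB 7 0]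

lemma Q_mul_sq_lt_P_mul_one_sub_sq {x : ℝ} (hx₀ : 0 ≤ x) (hx : x ≤ 23 / 100) :
    Q x * x ^ 2 < P x * (1 - x ^ 2) := by
  rw [← sub_pos, P_mul_one_sub_sq_sub_Q_mul_sq]
  calc 0 < ∑ i, coeffLowerBound i * x ^ (i : ℕ) := sum_coeffLowerBound_pos hx₀ hx
    _ ≤ ∑ i, coeff i * x ^ (i : ℕ) := Finset.sum_le_sum fun i _ =>
      mul_le_mul_of_nonneg_right (coeffLowerBound_le i) (pow_nonneg hx₀ _)

end Nishizawa

theorem g2_pos (x : ℝ) (hx : 0 < x)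
    (hx' : x < π / 2 + (π ^ 3 - 60 * (π - 2)) * π ^ 3 / (240 * (π ^ 3 - 24 * (π - 2)))) :
    ((-80 * π ^ 2 + 320 * π - 320) * x ^ 6 +
        (240 * π ^ 3 - 992 * π ^ 2 + 1088 * π - 128) * x ^ 5 +
        (-260 * π ^ 4 + 1216 * π ^ 3 - 1344 * π ^ 2 - 576 * π + 960) * x ^ 4 +
        (120 * π ^ 5 - 728 * π ^ 4 + 720 * π ^ 3 + 1472 * π ^ 2 - 1920 * π) * x ^ 3 +
        (-20 * π ^ 6 + 212 * π ^ 5 - 132 * π ^ 4 - 1184 * π ^ 3 + 1440 * π ^ 2) * x ^ 2 +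
        (-24 * π ^ 6 - 16 * π ^ 5 + 408 * π ^ 4 - 480 * π ^ 3) * x +
        11 * π ^ 6 - 52 * π ^ 5 + 60 * π ^ 4) * Real.cos x ^ 2 -
      5 * (π - 2 * x) ^ 2 * ((-2 * π + 4) * x ^ 2 + (2 * π ^ 2 - 4 * π) * x + π ^ 2) ^ 2 *
        Real.sin x ^ 2 > 0 := by
  have hx₁ : x < 23 / 100 := hx'.trans Nishizawa.c₁_lt
  exact mul_cos_sq_sub_mul_sin_sq_pos (by positivity) (by nlinarith)
    (Nishizawa.Q_mul_sq_lt_P_mul_one_sub_sq hx.le hx₁.le)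
end

section
/- For all x in (0, c₁), the function G₁(x) = ln(cos x) - ln(π/2 - x) - (x/5 + 1)·ln(2/π + ((π-2)/π³)(π² - 4(π/2 - x)²)) is positive, where c₁ = π/2 + ((π³-60(π-2))π³)/(240(π³-24(π-2))). -/
open Real

/-!
With `t = π / 2 - x` we have `cos x / (π / 2 - x) = sin t / t`, and the base of the last logarithm
is the quadratic `sincApprox t` approximating `sin t / t`. The two tangent-line bounds for `log`,
`log y ≥ 1 - 1 / y` for `y = cos x / ((π / 2 - x) q)` and `log y ≤ y - 1` for `y = (π / 2) q`,
together with `cos x ≥ 1 - x ^ 2 / 2` and `log (π / 2) > 0.4515`, reduce `G₁ x > 0` to the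
positivity of an explicit polynomial in `x` and `π`. Multiplied by `π ^ 3` it splits into three
manifestly positive terms as long as `0 < x < 1 / 4`, and `c₁ < 1 / 4`.
-/

lemma exp_lt_pi_div_two : exp 0.4515 < π / 2 := by
  have h := exp_bound' (x := 0.4515) (by norm_num) (by norm_num) (n := 7) (by norm_num)
  norm_num [Finset.sum_range_succ, Nat.factorial] at h
  linarith [pi_gt_d4]

lemma lt_log_pi_div_two : 0.4515 < log (π / 2) :=
  (lt_log_iff_exp_lt (by positivity)).2 exp_lt_pi_div_two

lemma one_sub_div_le_log_sub_log {a b : ℝ} (ha : 0 < a) (hb : 0 < b) :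
    1 - b / a ≤ log a - log b := by
  have h := one_sub_inv_le_log_of_pos (div_pos ha hb)
  rwa [inv_div, log_div ha.ne' hb.ne'] at h

lemma log_add_one_sub_mul_le_neg_log {c u : ℝ} (hc : 0 < c) (hu : 0 < u) :
    log c + 1 - c * u ≤ -log u := by
  have h := log_le_sub_one_of_pos (mul_pos hc hu)
  rw [log_mul hc.ne' hu.ne'] at h
  linarith

lemma c₁_lt_one_div_four :
    π / 2 + (π ^ 3 - 60 * (π - 2)) * π ^ 3 / (240 * (π ^ 3 - 24 * (π - 2))) < 1 / 4 := by
  have hπ := pi_gt_d4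
  have hπ' := pi_lt_d4
  have hπ3 : 31 < π ^ 3 ∧ π ^ 3 < 31.01 := ⟨by nlinarith [sq_nonneg π], by nlinarith [sq_nonneg π]⟩
  have hD : 0 < 240 * (π ^ 3 - 24 * (π - 2)) := by nlinarith
  rw [← lt_sub_iff_add_lt', div_lt_iff₀ hD]
  nlinarith

/-- The quadratic in `t` that equals `sin t / t` at `t = π / 2` and in the limit `t → 0`. -/
noncomputable def sincApprox (t : ℝ) : ℝ := 2 / π + (π - 2) / π ^ 3 * (π ^ 2 - 4 * t ^ 2)

lemma sincApprox_pos {t : ℝ} (ht : |t| ≤ π / 2) : 0 < sincApprox t := by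
  have hπ := pi_gt_three
  have ht2 : 4 * t ^ 2 ≤ π ^ 2 := by nlinarith [sq_abs t, abs_nonneg t]
  have h_quad : 0 ≤ (π - 2) / π ^ 3 * (π ^ 2 - 4 * t ^ 2) :=
    mul_nonneg (div_nonneg (by linarith) (by positivity)) (by linarith)
  have h_const : 0 < 2 / π := by positivity
  unfold sincApprox
  linarith

/-- `G₁ x` is bounded below by this expression divided by `cos x`, once `cos x ≥ 1 - x ^ 2 / 2`
and `log (π / 2) > 0.4515` are inserted into the tangent-line bounds. -/
lemma sincApprox_minorant_pos {x : ℝ} (hx : 0 < x) (hx' : x < 1 / 4) :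
    0 < (1 - x ^ 2 / 2) * (1 + x / 5 * (1.4515 - π / 2 * sincApprox (π / 2 - x)))
      - (π / 2 - x) * sincApprox (π / 2 - x) := by
  have hπ := pi_gt_d4
  have hπ' := pi_lt_d4
  have hπ2 : 9.869 < π ^ 2 ∧ π ^ 2 < 9.8697 := ⟨by nlinarith, by nlinarith⟩
  have hπ3 : 31.003 < π ^ 3 ∧ π ^ 3 < 31.007 := ⟨by nlinarith, by nlinarith⟩
  have h_lin : 0 < 6 * π ^ 2 - 1.9097 * π ^ 3 := by nlinarith
  have h_mid : 0 < (-12 * π + 6.8 * π ^ 2 - 0.9 * π ^ 3)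
      + (8 - 4.8 * π + 0.4 * π ^ 2 - 0.04515 * π ^ 3) * x := by
    have : -4.6 < 8 - 4.8 * π + 0.4 * π ^ 2 - 0.04515 * π ^ 3 := by linarith
    nlinarith
  have h_top : 0 < 0.2 * π * (π - 2) * (π - x) := by
    apply mul_pos (mul_pos _ _) _ <;> linarith
  have h_expand : π ^ 3 * ((1 - x ^ 2 / 2) * (1 + x / 5 * (1.4515 - π / 2 * sincApprox (π / 2 - x)))
      - (π / 2 - x) * sincApprox (π / 2 - x))
      = (6 * π ^ 2 - 1.9097 * π ^ 3) * x
        + ((-12 * π + 6.8 * π ^ 2 - 0.9 * π ^ 3)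
          + (8 - 4.8 * π + 0.4 * π ^ 2 - 0.04515 * π ^ 3) * x) * x ^ 2
        + 0.2 * π * (π - 2) * (π - x) * x ^ 4 := by
    unfold sincApprox
    field_simp
    ring
  rw [← mul_pos_iff_of_pos_left (by positivity : (0 : ℝ) < π ^ 3), h_expand]
  positivity

theorem G1_pos (x : ℝ) (hx : 0 < x)
    (hx' : x < π / 2 + (π ^ 3 - 60 * (π - 2)) * π ^ 3 / (240 * (π ^ 3 - 24 * (π - 2)))) :
    Real.log (Real.cos x) - Real.log (π / 2 - x) -
      (x / 5 + 1) *
        Real.log (2 / π + (π - 2) / π ^ 3 * (π ^ 2 - 4 * (π / 2 - x) ^ 2)) > 0 := by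
  have hx₁ : x < 1 / 4 := hx'.trans c₁_lt_one_div_four
  have hπ := pi_gt_three
  have ht : 0 < π / 2 - x := by linarith
  have hcos : 0 < cos x := cos_pos_of_mem_Ioo ⟨by linarith, by linarith⟩
  have hq : 0 < sincApprox (π / 2 - x) := sincApprox_pos (by rw [abs_of_pos ht]; linarith)
  have h_minorant := sincApprox_minorant_pos hx hx₁
  change 0 < log (cos x) - log (π / 2 - x) - (x / 5 + 1) * log (sincApprox (π / 2 - x))
  set q := sincApprox (π / 2 - x)
  have h_ratio := one_sub_div_le_log_sub_log hcos (mul_pos ht hq)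
  rw [log_mul ht.ne' hq.ne'] at h_ratio
  have h_tangent : 1.4515 - π / 2 * q < -log q := by
    linarith [log_add_one_sub_mul_le_neg_log (by positivity : (0 : ℝ) < π / 2) hq,
      lt_log_pi_div_two]
  have h_quot : (π / 2 - x) * q / cos x < 1 + x / 5 * (1.4515 - π / 2 * q) := by
    have h_cos := one_sub_sq_div_two_le_cos (x := x)
    have h_factor : 0 < 1 + x / 5 * (1.4515 - π / 2 * q) :=
      pos_of_mul_pos_right (by linarith [mul_pos ht hq]) (by nlinarith : (0 : ℝ) ≤ 1 - x ^ 2 / 2)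
    rw [div_lt_iff₀ hcos]
    nlinarith
  linarith [mul_le_mul_of_nonneg_left h_tangent.le (by positivity : (0 : ℝ) ≤ x / 5)]
end
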